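/- arXiv:2005.02711 — 4 statements merged into one kernel-verified Lean document; each statement's English description precedes it below -/
import Mathlib

section
/- Let D be a division ring, f ∈ D[x] a polynomial, and λ₁, λ₂ ∈ D two distinct roots of f (under left evaluation). Suppose g ∈ D[x] satisfies f = g · (x − λ₁). Then γ = (λ₁ − λ₂)·λ₂·(λ₁ − λ₂)⁻¹ is a root of g, i.e., g(γ) = 0. -/
open Polynomial

private lemma pow_conj_aux {D : Type*} [Ring D] {γ b c : D} (hγ : γ * c = c * b) :
    ∀ n : ℕ, γ ^ n * c = c * b ^ n := by
  intro n
  induction n with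
  | zero => simp
  | succ n ih => rw [pow_succ, pow_succ, mul_assoc, hγ, ← mul_assoc, ih, mul_assoc]

private lemma eval_mul_X_sub_C_eq {D : Type*} [Ring D] (g : D[X]) (a b γ : D)
    (hγ : γ * (b - a) = (b - a) * b) :
    (g * (X - C a)).eval b = g.eval γ * (b - a) := by
  induction g using Polynomial.induction_on' with
  | add p q hp hq => rw [add_mul, eval_add, hp, hq, eval_add, add_mul]
  | monomial n c =>
      have : (monomial n c : D[X]) * (X - C a)
          = monomial (n + 1) c - monomial n (c * a) := by
        rw [mul_sub, monomial_mul_C]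
        congr 1
        rw [← monomial_one_one_eq_X, monomial_mul_monomial, mul_one]
      rw [this, eval_sub, eval_monomial, eval_monomial, eval_monomial,
        mul_assoc c (γ ^ n), pow_conj_aux hγ n, pow_succ']
      noncomm_ring

/-- Wedderburn's method: over a division ring `D`, if `λ₁, λ₂`
are distinct roots of `f` (under left evaluation) and `f = g * (X - C lam₁)`, then
`γ = (λ₁ - λ₂) λ₂ (λ₁ - λ₂)⁻¹` is a root of `g`. -/
theorem wedderburn_method
    {D : Type*} [DivisionRing D] (f g : D[X]) (lam₁ lam₂ : D)
    (hne : lam₁ ≠ lam₂)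
    (h₁ : f.eval lam₁ = 0) (h₂ : f.eval lam₂ = 0)
    (hfg : f = g * (X - C lam₁)) :
    g.eval ((lam₁ - lam₂) * lam₂ * (lam₁ - lam₂)⁻¹) = 0 := by
  have hc : lam₂ - lam₁ ≠ 0 := sub_ne_zero.mpr (Ne.symm hne)
  set c := lam₂ - lam₁ with hcdef
  have hγeq : (lam₁ - lam₂) * lam₂ * (lam₁ - lam₂)⁻¹ = c * lam₂ * c⁻¹ := by
    have h : lam₁ - lam₂ = -c := (neg_sub lam₂ lam₁).symm
    rw [h, inv_neg, neg_mul, neg_mul, mul_neg, neg_neg]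
  set γ := c * lam₂ * c⁻¹ with hγdef
  have hγ : γ * c = c * lam₂ := by
    rw [hγdef, mul_assoc, inv_mul_cancel₀ hc, mul_one]
  have key := eval_mul_X_sub_C_eq g lam₁ lam₂ γ hγ
  rw [← hfg, h₂, ← hcdef] at key
  rw [hγeq]
  exact (mul_eq_zero.mp key.symm).resolve_right hc
end

section
/- Let ℍ denote the real quaternions and f = cₙxⁿ + ⋯ + c₁x + c₀ ∈ ℍ[x]. Then every coefficient of the companion polynomial C_f = f̄·f lies in the image of ℝ in ℍ; equivalently, there exists a polynomial q ∈ ℝ[x] whose image under the coefficient-wise embedding ℝ[x] → ℍ[x] equals f̄·f. -/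
open Polynomial

/-- The conjugate polynomial: apply quaternion conjugation (`star`)
coefficient-wise. -/
noncomputable def polyConj (f : (Quaternion ℝ)[X]) : (Quaternion ℝ)[X] :=
  f.sum fun i a => C (star a) * X ^ i

lemma polyConj_coeff (f : (Quaternion ℝ)[X]) (n : ℕ) :
    (polyConj f).coeff n = star (f.coeff n) := by
  rw [polyConj, Polynomial.sum, Polynomial.finset_sum_coeff]
  simp only [Polynomial.coeff_C_mul, Polynomial.coeff_X_pow, mul_ite, mul_one, mul_zero]
  rw [Finset.sum_ite_eq f.support n (fun i => star (f.coeff i))]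
  by_cases h : n ∈ f.support
  · simp [h]
  · simp [h, Polynomial.notMem_support_iff.mp h]

lemma companion_coeff_self_adjoint (f : (Quaternion ℝ)[X]) (k : ℕ) :
    star ((polyConj f * f).coeff k) = (polyConj f * f).coeff k := by
  rw [Polynomial.coeff_mul]
  rw [star_sum]
  rw [← Finset.Nat.sum_antidiagonal_swap]
  apply Finset.sum_congr rfl
  intro p hp
  simp [polyConj_coeff, star_mul]

/-- the companion polynomial `C_f = f̄ · f` of a quaternion
polynomial has all its coefficients in the image of `ℝ`; i.e., it is the image
of a real polynomial under the coefficient-wise embedding `ℝ[x] → ℍ[x]`. -/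
theorem companion_is_real (f : (Quaternion ℝ)[X]) :
    ∃ q : ℝ[X], q.map (algebraMap ℝ (Quaternion ℝ)) = polyConj f * f := by
  set g := polyConj f * f with hg
  refine ⟨g.sum fun n a => C a.re * X ^ n, ?_⟩
  apply Polynomial.ext; intro k
  rw [Polynomial.coeff_map]
  rw [Polynomial.sum, Polynomial.finset_sum_coeff]
  simp only [Polynomial.coeff_C_mul, Polynomial.coeff_X_pow, mul_ite, mul_one, mul_zero]
  rw [Finset.sum_ite_eq g.support k (fun i => (g.coeff i).re)]
  have hr : g.coeff k = ((g.coeff k).re : Quaternion ℝ) :=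
    Quaternion.star_eq_self.mp (companion_coeff_self_adjoint f k)
  by_cases h : k ∈ g.support
  · simp only [h, if_true]
    rw [hr]
    simp [Quaternion.algebraMap_def]
  · simp only [h, if_false, map_zero]
    rw [Polynomial.notMem_support_iff.mp h]
end

section
/- Let ℍ denote the real quaternions, f, g ∈ ℍ[x], and λ ∈ ℍ. If f = g · (x − λ), then the companion polynomials satisfy C_f = C_g · (x² − Tr(λ)x + Norm(λ)), i.e., f̄·f = (ḡ·g) · (x² − (λ + λ̄)x + λ̄λ) in ℍ[x]. -/
open Polynomial

lemma polyConj_mul (p q : (Quaternion ℝ)[X]) :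
    polyConj (p * q) = polyConj q * polyConj p := by
  apply Polynomial.ext; intro n
  simp only [polyConj_coeff, coeff_mul, star_sum, star_mul]
  exact Finset.Nat.sum_antidiagonal_swap
    (f := fun x => star (q.coeff x.1) * star (p.coeff x.2))

lemma companion_coeff_real (g : (Quaternion ℝ)[X]) (n : ℕ) :
    star ((polyConj g * g).coeff n) = (polyConj g * g).coeff n := by
  simp only [coeff_mul, star_sum, star_mul, polyConj_coeff, star_star]
  exact Finset.Nat.sum_antidiagonal_swap
    (f := fun x => star (g.coeff x.1) * g.coeff x.2)

lemma companion_commute_C (g : (Quaternion ℝ)[X]) (a : Quaternion ℝ) :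
    C a * (polyConj g * g) = (polyConj g * g) * C a := by
  apply Polynomial.ext; intro n
  rw [coeff_C_mul, coeff_mul_C]
  have hr := Quaternion.star_eq_self.mp (companion_coeff_real g n)
  rw [hr]
  exact (Quaternion.coe_commute _ a).symm.eq

/-- if `f = g · (x - λ)` over the real quaternions, then the
companion polynomials satisfy
`f̄·f = (ḡ·g) · (x² - (λ + λ̄)x + λ̄λ)`. -/
theorem companion_of_linear_factor (f g : (Quaternion ℝ)[X]) (lam : Quaternion ℝ)
    (h : f = g * (X - C lam)) :
    polyConj f * f =
      (polyConj g * g) *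
        (X ^ 2 - C (lam + star lam) * X + C (star lam * lam)) := by
  subst h
  have hconj : polyConj (g * (X - C lam)) = (X - C (star lam)) * polyConj g := by
    rw [polyConj_mul]
    congr 1
    apply Polynomial.ext; intro n
    simp only [polyConj_coeff, coeff_sub, star_sub, coeff_X, coeff_C,
      apply_ite (star : Quaternion ℝ → Quaternion ℝ), star_one, star_zero]
  have hcomm : (X - C (star lam)) * (polyConj g * g) =
      (polyConj g * g) * (X - C (star lam)) := by
    rw [sub_mul, mul_sub, X_mul, companion_commute_C]
  have expand : (X - C (star lam)) * (X - C lam) =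
      X ^ 2 - C (lam + star lam) * X + C (star lam * lam) := by
    rw [sub_mul, mul_sub, mul_sub, ← C_mul, C_add, add_mul, X_mul_C, sq]
    abel
  calc polyConj (g * (X - C lam)) * (g * (X - C lam))
      = (X - C (star lam)) * (polyConj g * g) * (X - C lam) := by
        rw [hconj]; simp only [mul_assoc]
    _ = (polyConj g * g) * ((X - C (star lam)) * (X - C lam)) := by
        rw [hcomm, mul_assoc]
    _ = _ := by rw [expand]
end

section
/- Let ℍ denote the real quaternions and p ∈ ℝ[x] a monic irreducible polynomial. Suppose p has a root λ₁ ∈ ℍ that does not lie in the image of ℝ in ℍ. Then the image of p in ℍ[x] decomposes as (x − λ₂)·(x − λ₁), where λ₂ = aλ₁a⁻¹ for some nonzero a ∈ ℍ (so λ₂ is an inner conjugate of λ₁). -/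
/-!
Every quaternion `q` is a root of its reduced characteristic polynomial
`X² - 2 re(q) X + |q|²`, which over `ℍ` factors as `(X - q̄)(X - q)`. An irreducible monic real
polynomial with the root `q` is the minimal polynomial of `q`; when `q` is not real it has degree
at least two, so it is this quadratic. Finally `q̄` is conjugate to `q`: any nonzero pure
quaternion orthogonal to the imaginary part of `q` anticommutes with it.
-/

open Polynomial

namespace Quaternion

section CommRing

variable {R : Type*} [CommRing R]

noncomputable def reducedCharpoly (q : ℍ[R]) : R[X] :=
  X ^ 2 - C (2 * q.re) * X + C (normSq q)

theorem map_reducedCharpoly (q : ℍ[R]) :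
    (reducedCharpoly q).map (algebraMap R ℍ[R]) = (X - C (star q)) * (X - C q) := by
  have htrace : algebraMap R ℍ[R] (2 * q.re) = star q + q := (star_add_self' q).symm
  have hnorm : algebraMap R ℍ[R] (normSq q) = star q * q := (star_mul_self q).symm
  have hXq : (X : ℍ[R][X]) * C q = C q * X := X_mul
  simp only [reducedCharpoly, Polynomial.map_add, Polynomial.map_sub, Polynomial.map_pow,
    Polynomial.map_mul, map_X, map_C, htrace, hnorm]
  rw [C_add, C_mul, sub_mul, mul_sub, mul_sub, hXq]
  noncomm_ring

theorem aeval_reducedCharpoly (q : ℍ[R]) : aeval q (reducedCharpoly q) = 0 := by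
  rw [aeval_def, ← eval_map, map_reducedCharpoly, eval_mul_X_sub_C]

theorem monic_reducedCharpoly (q : ℍ[R]) : (reducedCharpoly q).Monic := by
  unfold reducedCharpoly; monicity!

theorem natDegree_reducedCharpoly [Nontrivial R] (q : ℍ[R]) :
    (reducedCharpoly q).natDegree = 2 := by
  unfold reducedCharpoly; compute_degree!

theorem mul_eq_star_mul_of_re_eq_zero {a q : ℍ[R]} (ha : a.re = 0)
    (horth : a.imI * q.imI + a.imJ * q.imJ + a.imK * q.imK = 0) : a * q = star q * a := by
  ext <;> simp only [re_mul, imI_mul, imJ_mul, imK_mul, re_star, imI_star, imJ_star, imK_star, ha]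
  · linear_combination (-2) * horth
  all_goals ring

theorem exists_ne_zero_mul_eq_star_mul [Nontrivial R] (q : ℍ[R]) :
    ∃ a : ℍ[R], a ≠ 0 ∧ a * q = star q * a := by
  by_cases hij : q.imI = 0 ∧ q.imJ = 0
  · obtain ⟨a, ha⟩ := (equivTuple R).surjective ![0, 1, 0, 0]
    simp only [equivTuple_apply, Matrix.vecCons_inj] at ha
    refine ⟨a, fun h => by simp [h] at ha, mul_eq_star_mul_of_re_eq_zero ha.1 ?_⟩
    simp [ha, hij]
  · obtain ⟨a, ha⟩ := (equivTuple R).surjective ![0, q.imJ, -q.imI, 0]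
    simp only [equivTuple_apply, Matrix.vecCons_inj] at ha
    refine ⟨a, fun h => hij ?_, mul_eq_star_mul_of_re_eq_zero ha.1 ?_⟩
    · rw [h] at ha
      exact ⟨neg_eq_zero.mp ha.2.2.1.symm, ha.2.1.symm⟩
    · rw [ha.2.1, ha.2.2.1, ha.2.2.2.1]; ring

end CommRing

theorem minpoly_eq_reducedCharpoly {K : Type*} [Field K] {q : ℍ[K]}
    (hq : q ∉ Set.range (algebraMap K ℍ[K])) : minpoly K q = reducedCharpoly q := by
  have hint : IsIntegral K q := ⟨_, monic_reducedCharpoly q, aeval_reducedCharpoly q⟩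
  refine (minpoly.unique_of_degree_le_degree_minpoly K q (monic_reducedCharpoly q)
    (aeval_reducedCharpoly q) ?_).symm
  rw [degree_eq_natDegree (monic_reducedCharpoly q).ne_zero,
    degree_eq_natDegree (minpoly.ne_zero hint), natDegree_reducedCharpoly]
  exact_mod_cast (minpoly.two_le_natDegree_iff hint).mpr hq

theorem exists_ne_zero_mul_mul_inv_eq_star {R : Type*} [Field R] [LinearOrder R]
    [IsStrictOrderedRing R] (q : ℍ[R]) : ∃ a : ℍ[R], a ≠ 0 ∧ a * q * a⁻¹ = star q := by
  obtain ⟨a, ha, h⟩ := exists_ne_zero_mul_eq_star_mul q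
  exact ⟨a, ha, by rw [h, mul_inv_cancel_right₀ ha]⟩

end Quaternion

/-- if a monic irreducible real polynomial `p` has a root
`λ₁ ∈ ℍ` not lying in the image of `ℝ`, then its image in `ℍ[x]` factors as
`(x - λ₂)·(x - λ₁)` where `λ₂ = a·λ₁·a⁻¹` is an inner conjugate of `λ₁`. -/
theorem monic_irreducible_real_factors_over_quaternions
    (p : ℝ[X]) (hmonic : p.Monic) (hirr : Irreducible p)
    (lam₁ : Quaternion ℝ)
    (hroot : (p.map (algebraMap ℝ (Quaternion ℝ))).eval lam₁ = 0)
    (hnotreal : lam₁ ∉ Set.range (algebraMap ℝ (Quaternion ℝ))) :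
    ∃ a : Quaternion ℝ, a ≠ 0 ∧
      p.map (algebraMap ℝ (Quaternion ℝ)) =
        (X - C (a * lam₁ * a⁻¹)) * (X - C lam₁) := by
  have hp : p = minpoly ℝ lam₁ :=
    minpoly.eq_of_irreducible_of_monic hirr (by rwa [aeval_def, ← eval_map]) hmonic
  obtain ⟨a, ha, hconj⟩ := Quaternion.exists_ne_zero_mul_mul_inv_eq_star lam₁
  refine ⟨a, ha, ?_⟩
  rw [hconj, hp, Quaternion.minpoly_eq_reducedCharpoly hnotreal,
    Quaternion.map_reducedCharpoly]
end
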